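/- arXiv:2012.14586 — 9 statements merged into one kernel-verified Lean document; each statement's English description precedes it below -/
import Mathlib

section
/- Let S and S' be safety hyperproperties over Σ. Then S = S' if and only if bad(S) = bad(S'). -/
/-- A finite trace `t` is a prefix of an infinite trace `t'`. -/
def IsPrefixOf {α : Type*} (t : List α) (t' : ℕ → α) : Prop :=
  ∀ i : ℕ, ∀ h : i < t.length, t' i = t.get ⟨i, h⟩

/-- A finite set `T` of finite traces is a prefix of a set `T'` of infinite traces. -/
def SetPrefixOf {α : Type*} (T : Finset (List α)) (T' : Set (ℕ → α)) : Prop :=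
  ∀ t ∈ T, ∃ t' ∈ T', IsPrefixOf t t'

/-- `T` is a bad prefix of the hyperproperty `H`. -/
def BadPrefix {α : Type*} (H : Set (Set (ℕ → α))) (T : Finset (List α)) : Prop :=
  ∀ T' : Set (ℕ → α), SetPrefixOf T T' → T' ∉ H

/-- `H` is a safety hyperproperty. -/
def SafetyHyper {α : Type*} (H : Set (Set (ℕ → α))) : Prop :=
  ∀ T' : Set (ℕ → α), T' ∉ H →
    ∃ T : Finset (List α), BadPrefix H T ∧ SetPrefixOf T T'

theorem stmt2 {α : Type*} (S S' : Set (Set (ℕ → α)))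
    (hS : SafetyHyper S) (hS' : SafetyHyper S') :
    S = S' ↔ {T : Finset (List α) | BadPrefix S T} = {T : Finset (List α) | BadPrefix S' T} := by
  constructor
  · rintro rfl; rfl
  · intro h
    have key : ∀ (A B : Set (Set (ℕ → α))), SafetyHyper B →
        ({T : Finset (List α) | BadPrefix A T} = {T : Finset (List α) | BadPrefix B T}) →
        ∀ T', T' ∉ B → T' ∉ A := by
      intro A B hB hAB T' hT'
      obtain ⟨T, hbad, hpre⟩ := hB T' hT'
      have : BadPrefix A T := by
        have := Set.ext_iff.mp hAB T
        exact this.mpr hbad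
      exact this T' hpre
    ext T'
    constructor
    · intro hT'; by_contra hn
      exact key S S' hS' h T' hn hT'
    · intro hT'; by_contra hn
      exact key S' S hS h.symm T' hn hT'
end

section
/- Let S and S' be k-safety hyperproperties over Σ. Then S = S' if and only if bad(S,k) = bad(S',k), i.e. two k-safety hyperproperties are equal exactly when they have the same bad prefixes of cardinality at most k. -/
/-- `H` is a `k`-safety hyperproperty. -/
def KSafety {α : Type*} (k : ℕ) (H : Set (Set (ℕ → α))) : Prop :=
  ∀ T' : Set (ℕ → α), T' ∉ H →
    ∃ T : Finset (List α), T.card ≤ k ∧ BadPrefix H T ∧ SetPrefixOf T T'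

/-- `bad(H,k)`: the set of bad prefixes of `H` of cardinality at most `k`. -/
def BadK {α : Type*} (H : Set (Set (ℕ → α))) (k : ℕ) : Set (Finset (List α)) :=
  {T | T.card ≤ k ∧ BadPrefix H T}

theorem stmt3 {α : Type*} (k : ℕ) (S S' : Set (Set (ℕ → α)))
    (hS : KSafety k S) (hS' : KSafety k S') :
    S = S' ↔ BadK S k = BadK S' k := by
  constructor
  · rintro rfl; rfl
  · intro h
    have key : ∀ (A B : Set (Set (ℕ → α))), KSafety k B → BadK A k = BadK B k →
        A ⊆ B := by
      intro A B hB hAB T' hT'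
      by_contra hT'B
      obtain ⟨T, hcard, hbad, hpre⟩ := hB T' hT'B
      have : T ∈ BadK A k := hAB ▸ ⟨hcard, hbad⟩
      exact this.2 T' hpre hT'
    exact Set.Subset.antisymm (key S S' hS' h) (key S' S hS h.symm)
end

section
/- Let M be a DFA over an alphabet α with state type Q. Then there exists a DFA M' over α with the same state type Q (in particular with the same number of states) such that M' accepts exactly the finite words w over α with the property that for every infinite sequence f : ℕ → α there exists n : ℕ such that w ++ take(n, f) is accepted by M. -/
theorem stmt4 {α Q : Type*} (M : DFA α Q) :
    ∃ M' : DFA α Q, ∀ w : List α,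
      w ∈ M'.accepts ↔
        ∀ f : ℕ → α, ∃ n : ℕ, w ++ List.ofFn (fun i : Fin n => f i) ∈ M.accepts := by
  refine ⟨⟨M.step, M.start,
    {q | ∀ f : ℕ → α, ∃ n : ℕ, M.evalFrom q (List.ofFn fun i : Fin n => f i) ∈ M.accept}⟩,
    fun w => ?_⟩
  simp only [DFA.mem_accepts, DFA.eval, DFA.evalFrom_of_append]
  rfl
end

section
/- Let N be an NFA over an alphabet α with finite state type Q. Then there exists a DFA over α whose state type has cardinality at most 2^{|Q|} and which accepts exactly the finite words w over α with the property that for every infinite sequence f : ℕ → α there exists n : ℕ such that w ++ take(n, f) is accepted by N. -/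
open Classical in
theorem stmt5 {α Q : Type*} [Fintype Q] (N : NFA α Q) :
    ∃ (Q' : Type) (inst : Fintype Q') (M : DFA α Q'),
      @Fintype.card Q' inst ≤ 2 ^ Fintype.card Q ∧
      ∀ w : List α, w ∈ M.accepts ↔
        ∀ f : ℕ → α, ∃ n : ℕ, w ++ List.ofFn (fun i : Fin n => f i) ∈ N.accepts := by
  classical
  set n := Fintype.card Q with hn
  obtain ⟨e⟩ : Nonempty (Q ≃ Fin n) := ⟨Fintype.equivFin Q⟩
  -- transport N along e
  let N' : NFA α (Fin n) :=
    { step := fun s a => e '' N.step (e.symm s) a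
      start := e '' N.start
      accept := e '' N.accept }
  have hstep : ∀ (S : Set Q) (a : α), N'.stepSet (e '' S) a = e '' N.stepSet S a := by
    intro S a
    ext t
    simp only [NFA.stepSet, Set.mem_iUnion, Set.mem_image, N']
    constructor
    · rintro ⟨s, ⟨q, hq, rfl⟩, ⟨r, hr, rfl⟩⟩
      exact ⟨r, ⟨q, hq, by simpa using hr⟩, rfl⟩
    · rintro ⟨r, ⟨q, hq, hr⟩, rfl⟩
      exact ⟨e q, ⟨q, hq, rfl⟩, ⟨r, by simpa using hr, rfl⟩⟩
  have heval : ∀ (S : Set Q) (w : List α), N'.evalFrom (e '' S) w = e '' N.evalFrom S w := by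
    intro S w
    induction w generalizing S with
    | nil => rfl
    | cons a w ih =>
      simp only [NFA.evalFrom, List.foldl_cons] at *
      rw [hstep, ih]
  have hacc : ∀ w : List α, w ∈ N'.accepts ↔ w ∈ N.accepts := by
    intro w
    simp only [NFA.mem_accepts, NFA.eval, N']
    rw [heval]
    constructor
    · rintro ⟨s, ⟨q, hq, rfl⟩, ⟨r, hr, hre⟩⟩
      exact ⟨q, hq, by rwa [e.injective hre.symm]⟩
    · rintro ⟨q, hq, hq'⟩
      exact ⟨e q, ⟨q, hq, rfl⟩, ⟨q, hq', rfl⟩⟩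
  let D := N'.toDFA
  refine ⟨Set (Fin n), inferInstance, ⟨D.step, D.start,
    {S | ∀ f : ℕ → α, ∃ m : ℕ, D.evalFrom S (List.ofFn fun i : Fin m => f i) ∈ D.accept}⟩,
    by simp [Fintype.card_set], fun w => ?_⟩
  have hDacc : ∀ v : List α, v ∈ D.accepts ↔ v ∈ N.accepts := by
    intro v; rw [← hacc v, ← N'.toDFA_correct]
  simp only [DFA.mem_accepts]
  constructor
  · intro h f
    obtain ⟨m, hm⟩ := h f
    refine ⟨m, (hDacc _).mp ?_⟩
    rw [DFA.mem_accepts, DFA.eval, DFA.evalFrom_of_append]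
    exact hm
  · intro h f
    obtain ⟨m, hm⟩ := h f
    refine ⟨m, ?_⟩
    rw [← hDacc] at hm
    rw [DFA.mem_accepts, DFA.eval, DFA.evalFrom_of_append] at hm
    exact hm
end

section
/- Let k ∈ ℕ and let M be a DFA over the alphabet Fin k → Σ with finite state type Q. Then there exists a DFA M' over the alphabet Fin k → Σ whose state type has cardinality at most |Q|^(k^k) and whose accepted language is exactly the set of words σ (lists over Fin k → Σ) such that for some function ς : Fin k → Fin k, the word σ.map (fun v => v ∘ ς) is accepted by M. -/
theorem stmt6 {α : Type*} {Q : Type*} [Fintype Q] (k : ℕ) (M : DFA (Fin k → α) Q) :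
    ∃ (Q' : Type) (inst : Fintype Q') (M' : DFA (Fin k → α) Q'),
      @Fintype.card Q' inst ≤ (Fintype.card Q) ^ (k ^ k) ∧
      M'.accepts =
        {σ : List (Fin k → α) | ∃ ς : Fin k → Fin k,
          σ.map (fun v => v ∘ ς) ∈ M.accepts} := by
  classical
  set n := Fintype.card Q with hn
  obtain ⟨e⟩ : Nonempty (Q ≃ Fin n) := ⟨Fintype.equivFin Q⟩
  refine ⟨(Fin k → Fin k) → Fin n, inferInstance, ?_, ?_, ?_⟩
  · exact { step := fun f a ς => e (M.step (e.symm (f ς)) (fun i => a (ς i)))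
            start := fun _ => e M.start
            accept := {f | ∃ ς, e.symm (f ς) ∈ M.accept} }
  · simp [Fintype.card_fun]
  · have key : ∀ (σ : List (Fin k → α)) (f : (Fin k → Fin k) → Fin n)
        (ς : Fin k → Fin k),
        DFA.evalFrom ⟨fun f a ς => e (M.step (e.symm (f ς)) (fun i => a (ς i))),
          fun _ => e M.start, {f | ∃ ς, e.symm (f ς) ∈ M.accept}⟩ f σ ς
          = e (M.evalFrom (e.symm (f ς)) (σ.map (fun v => v ∘ ς))) := by
      intro σ
      induction σ with
      | nil => intro f ς; simp [DFA.evalFrom]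
      | cons a σ ih =>
        intro f ς
        simp only [DFA.evalFrom, List.map_cons, List.foldl_cons] at *
        rw [ih]
        rw [Equiv.symm_apply_apply]; rfl
    ext σ
    simp only [DFA.mem_accepts, DFA.eval, Set.mem_setOf_eq]
    constructor
    · rintro ⟨ς, hς⟩
      exact ⟨ς, by rw [key] at hς; simpa using hς⟩
    · rintro ⟨ς, hς⟩
      exact ⟨ς, by rw [key]; simpa using hς⟩
end

section
/- Let k ∈ ℕ and let N be an NFA over the alphabet Fin k → Σ with finite state type Q. Then there exists a DFA over the alphabet Fin k → Σ whose state type has cardinality at most 2^(|Q| · k^k) and whose accepted language is exactly the set of words σ (lists over Fin k → Σ) such that for some function ς : Fin k → Fin k, the word σ.map (fun v => v ∘ ς) is accepted by N. -/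
theorem stmt7 {α : Type*} {Q : Type*} [Fintype Q] (k : ℕ) (N : NFA (Fin k → α) Q) :
    ∃ (Q' : Type) (inst : Fintype Q') (M : DFA (Fin k → α) Q'),
      @Fintype.card Q' inst ≤ 2 ^ (Fintype.card Q * k ^ k) ∧
      M.accepts =
        {σ : List (Fin k → α) | ∃ ς : Fin k → Fin k,
          σ.map (fun v => v ∘ ς) ∈ N.accepts} := by
  classical
  set n := Fintype.card Q with hn
  let e : Fin n ≃ Q := (Fintype.equivFin Q).symm
  let N2 : NFA (Fin k → α) (Fin n × (Fin k → Fin k)) :=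
    { step := fun p a => {p' | p'.2 = p.2 ∧ e p'.1 ∈ N.step (e p.1) (a ∘ p.2)}
      start := {p | e p.1 ∈ N.start}
      accept := {p | e p.1 ∈ N.accept} }
  have key : ∀ σ : List (Fin k → α), ∀ p : Fin n × (Fin k → Fin k),
      p ∈ N2.eval σ ↔ e p.1 ∈ N.eval (σ.map (fun v => v ∘ p.2)) := by
    intro σ
    induction σ using List.reverseRecOn with
    | nil => intro p; rfl
    | append_singleton σ a ih =>
      intro p
      simp only [NFA.eval, NFA.evalFrom_append, NFA.evalFrom_singleton, List.map_append, List.map_cons,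
        List.map_nil]
      rw [NFA.mem_stepSet, NFA.mem_stepSet]
      constructor
      · rintro ⟨p0, hp0, h2, h3⟩
        have hp0' := (ih p0).mp hp0
        rw [h2]
        exact ⟨e p0.1, hp0', h3⟩
      · rintro ⟨q, hq, hstep⟩
        exact ⟨(e.symm q, p.2), (ih (e.symm q, p.2)).mpr (by show e (e.symm q) ∈ N.eval (σ.map (fun v => v ∘ p.2)); rw [Equiv.apply_symm_apply]; exact hq), rfl, by simpa using hstep⟩
  have hacc : N2.accepts = {σ : List (Fin k → α) | ∃ ς : Fin k → Fin k,
      σ.map (fun v => v ∘ ς) ∈ N.accepts} := by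
    ext σ
    simp only [NFA.mem_accepts, Set.mem_setOf_eq]
    constructor
    · rintro ⟨⟨q, ς⟩, hq, hev⟩
      exact ⟨ς, e q, hq, (key σ (q, ς)).mp hev⟩
    · rintro ⟨ς, q, hq, hev⟩
      exact ⟨(e.symm q, ς), by show e (e.symm q) ∈ N.accept; rw [Equiv.apply_symm_apply]; exact hq,
        (key σ (e.symm q, ς)).mpr (by show e (e.symm q) ∈ N.eval (σ.map (fun v => v ∘ ς)); rw [Equiv.apply_symm_apply]; exact hev)⟩
  refine ⟨Set (Fin n × (Fin k → Fin k)), inferInstance, N2.toDFA, ?_, ?_⟩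
  · simp [Fintype.card_fun]
  · rw [NFA.toDFA_correct, hacc]
end

section
/- Let 1 ≤ k ≤ k' and let extend be the letterwise padding map from words over Σ^k to words over Σ^{k'} that repeats the last component of each letter. Let B be any set of finite sets of finite traces over Σ, and for a word w over Σ^k (respectively over Σ^{k'}) define Δ_k(w) to hold iff unzip(w) ∈ B (respectively Δ_{k'}). Let S and E be finite sets of words over Σ^k, and let S' and E' be their images under the wordwise extension map. Then the number of distinct row functions (fun e ∈ E => Δ_k(s ++ e)) as s ranges over S equals the number of distinct row functions (fun e' ∈ E' => Δ_{k'}(s' ++ e')) as s' ranges over S'. -/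
/-- `unzipW σ` is the finite set of the `k` component traces of a word `σ` over `Σ^k`. -/
def unzipW {α : Type*} [DecidableEq α] {k : ℕ} (σ : List (Fin k → α)) : Finset (List α) :=
  (Finset.univ : Finset (Fin k)).image (fun i => σ.map (fun v => v i))

/-- Pad a `k`-tuple to a `k'`-tuple by repeating its last component. -/
def extendTup {α : Type*} (k k' : ℕ) (hk : 1 ≤ k) (_hkk' : k ≤ k')
    (v : Fin k → α) : Fin k' → α :=
  fun i => if h : (i : ℕ) < k then v ⟨i, h⟩ else v ⟨k - 1, by omega⟩

/-- The row of `s` with respect to the set `E` of separating sequences: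
the function assigning to each `e ∈ E` the table entry `Δ (s ++ e)`
(and `none` outside of `E`). -/
def row {β : Type*} [DecidableEq β] (Δ : List β → Prop) (E : Finset (List β))
    (s : List β) : List β → Option Prop :=
  fun e => if e ∈ E then some (Δ (s ++ e)) else none

theorem stmt9 {α : Type*} [DecidableEq α] (k k' : ℕ) (hk : 1 ≤ k) (hkk' : k ≤ k')
    (B : Set (Finset (List α)))
    (S E : Finset (List (Fin k → α))) :
    ((row (fun w : List (Fin k → α) => unzipW w ∈ B) E) '' ↑S).ncard =
      ((row (fun w : List (Fin k' → α) => unzipW w ∈ B)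
          (E.image (List.map (extendTup k k' hk hkk')))) ''
        ↑(S.image (List.map (extendTup k k' hk hkk')))).ncard := by
  classical
  set ext := extendTup k k' hk hkk' with hext
  set L : List (Fin k → α) → List (Fin k' → α) := List.map ext with hL
  set E' := E.image L with hE'
  set Δ := fun w : List (Fin k → α) => unzipW w ∈ B with hΔ
  set Δ' := fun w : List (Fin k' → α) => unzipW w ∈ B with hΔ'
  -- restriction
  set res : (Fin k' → α) → (Fin k → α) := fun v i => v ⟨i, lt_of_lt_of_le i.isLt hkk'⟩ with hres
  have hresext : ∀ v : Fin k → α, res (ext v) = v := by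
    intro v; funext i
    simp [hres, hext, extendTup, i.isLt]
  have hLL : ∀ e : List (Fin k → α), (L e).map res = e := by
    intro e
    simp [hL, List.map_map, Function.comp_def, hresext]
  have hunzip : ∀ w : List (Fin k → α), unzipW (L w) = unzipW w := by
    intro w
    apply Finset.ext
    intro t
    simp only [unzipW, Finset.mem_image, Finset.mem_univ, true_and]
    constructor
    · rintro ⟨i, rfl⟩
      by_cases h : (i : ℕ) < k
      · exact ⟨⟨i, h⟩, by simp [hL, List.map_map, Function.comp_def, hext, extendTup, h]⟩
      · exact ⟨⟨k - 1, by omega⟩, by simp [hL, List.map_map, Function.comp_def, hext, extendTup, h]⟩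
    · rintro ⟨i, rfl⟩
      refine ⟨⟨i, lt_of_lt_of_le i.isLt hkk'⟩, ?_⟩
      simp [hL, List.map_map, Function.comp_def, hext, extendTup, i.isLt]
  have hΔL : ∀ w : List (Fin k → α), Δ' (L w) = Δ w := by
    intro w; simp [hΔ, hΔ', hunzip w]
  have hLapp : ∀ s e : List (Fin k → α), L (s ++ e) = L s ++ L e := by
    intro s e; simp [hL]
  set F : (List (Fin k → α) → Option Prop) → (List (Fin k' → α) → Option Prop) :=
    fun r e' => if e' ∈ E' then r (e'.map res) else none with hF
  have key : ∀ s, F (row Δ E s) = row Δ' E' (L s) := by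
    intro s
    funext e'
    by_cases h : e' ∈ E'
    · obtain ⟨e, he, rfl⟩ := Finset.mem_image.mp h
      simp only [hF, if_pos h, hLL, row, if_pos he, if_pos (Finset.mem_image_of_mem L he),
        ← hLapp, hΔL]
    · simp [hF, row, h]
  have hSimg : (↑(S.image L) : Set (List (Fin k' → α))) = L '' ↑S := Finset.coe_image
  rw [hSimg, ← Set.image_comp]
  have : (row Δ' E' ∘ L) = F ∘ (row Δ E) := by
    funext s; simp [Function.comp, key s]
  rw [this, Set.image_comp]
  symm
  apply Set.ncard_image_of_injOn
  rintro x ⟨s, hs, rfl⟩ y ⟨t, ht, rfl⟩ hxy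
  funext e
  by_cases he : e ∈ E
  · have := congrFun hxy (L e)
    have hLe : L e ∈ E' := Finset.mem_image_of_mem L he
    simpa [hF, if_pos hLe, hLL] using this
  · simp [row, he]
end

section
/- Let Σ be a type, k ∈ ℕ, P a predicate on k-tuples of infinite traces (P : (Fin k → (ℕ → Σ)) → Prop), and let H be the hyperproperty H = { T : Set (ℕ → Σ) | ∀ f : Fin k → (ℕ → Σ), (∀ i, f i ∈ T) → P f }. Then H is a safety hyperproperty if and only if H is a k-safety hyperproperty. -/
/-- Two list prefixes of the same infinite trace are comparable. -/
lemma prefix_of_prefix_of_len_le {α : Type*} {t u : List α} {s : ℕ → α}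
    (ht : IsPrefixOf t s) (hu : IsPrefixOf u s) (hlen : t.length ≤ u.length) :
    t <+: u := by
  have : t = u.take t.length := by
    apply List.ext_get
    · simp [Nat.min_eq_left hlen]
    · intro n h1 h2
      have hn : n < t.length := h1
      have hn' : n < u.length := lt_of_lt_of_le hn hlen
      simp only [List.get_eq_getElem, List.getElem_take]
      exact (ht n hn).symm.trans (hu n hn')
  rw [this]
  exact List.take_prefix _ _

lemma isPrefixOf_of_list_prefix {α : Type*} {t u : List α} {s : ℕ → α}
    (h : t <+: u) (hu : IsPrefixOf u s) : IsPrefixOf t s := by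
  intro i hi
  have hi' : i < u.length := lt_of_lt_of_le hi h.length_le
  rw [hu i hi']
  obtain ⟨r, rfl⟩ := h
  simp only [List.get_eq_getElem]
  exact List.getElem_append_left hi

theorem stmt14 {α : Type*} (k : ℕ) (P : (Fin k → (ℕ → α)) → Prop) :
    SafetyHyper {T : Set (ℕ → α) | ∀ f : Fin k → (ℕ → α), (∀ i, f i ∈ T) → P f} ↔
      KSafety k {T : Set (ℕ → α) | ∀ f : Fin k → (ℕ → α), (∀ i, f i ∈ T) → P f} := by
  classical
  set H : Set (Set (ℕ → α)) :=
    {T : Set (ℕ → α) | ∀ f : Fin k → (ℕ → α), (∀ i, f i ∈ T) → P f} with hH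
  constructor
  · intro hsafe T' hT'
    -- extract a counterexample tuple
    have hex : ∃ f : Fin k → (ℕ → α), (∀ i, f i ∈ T') ∧ ¬ P f := by
      by_contra hc
      push_neg at hc
      exact hT' (fun f hf => hc f hf)
    obtain ⟨f, hfT', hPf⟩ := hex
    have hrange : Set.range f ∉ H := by
      intro h
      exact hPf (h f (fun i => Set.mem_range_self i))
    obtain ⟨T, hbad, hpre⟩ := hsafe (Set.range f) hrange
    -- for each i, pick the longest element of T which is a prefix of f i
    let S : Fin k → Finset (List α) := fun i => T.filter (fun t => IsPrefixOf t (f i))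
    let L : Fin k → List α := fun i =>
      if h : (S i).Nonempty then ((S i).exists_max_image List.length h).choose else []
    have hLmem : ∀ i, (S i).Nonempty → L i ∈ S i ∧
        ∀ t ∈ S i, t.length ≤ (L i).length := by
      intro i h
      have := ((S i).exists_max_image List.length h).choose_spec
      simp only [L, dif_pos h]
      exact this
    have hLpre : ∀ i, IsPrefixOf (L i) (f i) := by
      intro i
      by_cases h : (S i).Nonempty
      · exact (Finset.mem_filter.mp (hLmem i h).1).2
      · simp only [L, dif_neg h]
        intro j hj
        simp at hj
    refine ⟨Finset.image L Finset.univ, ?_, ?_, ?_⟩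
    · exact le_trans (Finset.card_image_le) (by simp)
    · -- bad prefix
      intro T'' hT''pre
      apply hbad T''
      intro t ht
      obtain ⟨s, hs, hts⟩ := hpre t ht
      obtain ⟨i, rfl⟩ := hs
      have htS : t ∈ S i := Finset.mem_filter.mpr ⟨ht, hts⟩
      have hSne : (S i).Nonempty := ⟨t, htS⟩
      have hlen := (hLmem i hSne).2 t htS
      have htL : t <+: L i := prefix_of_prefix_of_len_le hts (hLpre i) hlen
      obtain ⟨s', hs', hLs'⟩ := hT''pre (L i) (Finset.mem_image.mpr ⟨i, Finset.mem_univ i, rfl⟩)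
      exact ⟨s', hs', isPrefixOf_of_list_prefix htL hLs'⟩
    · -- SetPrefixOf (image L univ) T'
      intro t ht
      obtain ⟨i, _, rfl⟩ := Finset.mem_image.mp ht
      exact ⟨f i, hfT' i, hLpre i⟩
  · intro hk T' hT'
    obtain ⟨T, _, hbad, hpre⟩ := hk T' hT'
    exact ⟨T, hbad, hpre⟩
end

section
/- There exists a 1-safety hyperproperty H over the alphabet Fin 3 such that the predicate on finite words w : List (Fin 3) expressing 'the singleton set {w} is a bad prefix of H' is not a computable predicate (¬ ComputablePred). -/
namespace Stmt17Aux

open Nat.Partrec (Code)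
open Nat.Partrec.Code

/-- An undecidable set of codes: the halting problem on input 0. -/
def S : Code → Prop := fun c => (eval c 0).Dom

/-- Encoding of a code as a finite word: `0^(encode c)` followed by `1`. -/
def g (c : Code) : List (Fin 3) := List.replicate (Encodable.encode c) 0 ++ [1]

/-- An undecidable, prefix-upward-closed set of words. -/
def B : List (Fin 3) → Prop := fun w => ∃ c : Code, S c ∧ g c <+: w

/-- The hyperproperty. -/
def H : Set (Set (ℕ → Fin 3)) :=
  {T' | ∀ t' ∈ T', ∀ v : List (Fin 3), IsPrefixOf v t' → ¬ B v}

lemma isPrefixOf_of_prefix {u v : List (Fin 3)} {t' : ℕ → Fin 3}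
    (huv : u <+: v) (hv : IsPrefixOf v t') : IsPrefixOf u t' := by
  intro i hi
  have hi' : i < v.length := lt_of_lt_of_le hi huv.length_le
  have := hv i hi'
  simp only [List.get_eq_getElem] at this ⊢
  rw [this, ← List.IsPrefix.getElem huv hi]

lemma B_mono {u v : List (Fin 3)} (huv : u <+: v) (hu : B u) : B v := by
  obtain ⟨c, hc, hpre⟩ := hu
  exact ⟨c, hc, hpre.trans huv⟩

/-- Extend a finite word by zeros. -/
def ext (w : List (Fin 3)) : ℕ → Fin 3 :=
  fun i => if h : i < w.length then w.get ⟨i, h⟩ else 0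

lemma isPrefixOf_ext (w : List (Fin 3)) : IsPrefixOf w (ext w) := by
  intro i hi; simp [ext, hi]

lemma g_length (c : Code) : (g c).length = Encodable.encode c + 1 := by
  simp [g]

lemma g_getElem_lt (c : Code) {i : ℕ} (hi : i < Encodable.encode c) :
    (g c)[i]'(by rw [g_length]; omega) = 0 := by
  have h' : i < (List.replicate (Encodable.encode c) (0 : Fin 3)).length := by simpa using hi
  simp only [g]
  rw [List.getElem_append_left h', List.getElem_replicate]

lemma g_getElem_eq (c : Code) :
    (g c)[Encodable.encode c]'(by rw [g_length]; omega) = 1 := by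
  have h : (List.replicate (Encodable.encode c) (0 : Fin 3)).length ≤ Encodable.encode c := by
    simp
  simp only [g]
  rw [List.getElem_append_right h]
  simp

/-- Key equivalence: `w ∈ B` iff `{w}` is a bad prefix of `H`. -/
lemma badPrefix_iff (w : List (Fin 3)) : BadPrefix H {w} ↔ B w := by
  constructor
  · intro hbad
    by_contra hw
    refine hbad {ext w} ?_ ?_
    · intro t ht
      simp only [Finset.mem_singleton] at ht
      rw [ht]
      exact ⟨ext w, rfl, isPrefixOf_ext w⟩
    -- {ext w} ∈ H
    intro t' ht' v hv hBv
    refine absurd ?_ (fun h => h)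
    exact False.elim (by
      rcases ht' with rfl
      obtain ⟨c, hc, hpre⟩ := hBv
      set n := Encodable.encode c with hn
      -- g c is a prefix of v, v is a prefix of ext w
      have hvlen : n < v.length := by
        have := hpre.length_le; rw [g_length] at this; omega
      have h1 : ext w n = 1 := by
        have h0 := hv n hvlen
        have h2 : v[n]'hvlen = 1 := by
          rw [← List.IsPrefix.getElem hpre (by rw [g_length]; omega)]
          exact g_getElem_eq c
        simpa [h2] using h0
      have hnw : n < w.length := by
        by_contra hnot
        simp [ext, hnot] at h1
      -- every position i < n of w is 0, and position n is 1, so g c <+: w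
      apply hw
      refine ⟨c, hc, ?_⟩
      have hkey : ∀ i (hi : i < n + 1), w[i]'(by omega) = (g c)[i]'(by rw [g_length]; omega) := by
        intro i hi
        have hiv : i < v.length := by omega
        have e1 : ext w i = v[i]'hiv := by simpa using hv i hiv
        have e2 : v[i]'hiv = (g c)[i]'(by rw [g_length]; omega) :=
          (List.IsPrefix.getElem hpre (by rw [g_length]; omega)).symm
        have e3 : ext w i = w[i]'(by omega) := by simp [ext, show i < w.length by omega]
        rw [← e3, e1, e2]
      have : g c = w.take (n + 1) := by
        apply List.ext_getElem
        · rw [g_length, List.length_take]; omega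
        · intro i h1 h2
          rw [List.getElem_take]
          exact (hkey i (by rw [g_length] at h1; omega)).symm
      rw [this]
      exact List.take_prefix _ _)
  · intro hB T' hpre hH
    obtain ⟨t', ht', hwt'⟩ := hpre w (Finset.mem_singleton_self w)
    exact hH t' ht' w hwt' hB

lemma S_iff (c : Code) : S c ↔ B (g c) := by
  constructor
  · intro h
    exact ⟨c, h, List.prefix_refl _⟩
  · rintro ⟨c', hc', hpre⟩
    have hle : Encodable.encode c' ≤ Encodable.encode c := by
      have := hpre.length_le; rw [g_length, g_length] at this; omega
    have heq : Encodable.encode c' = Encodable.encode c := by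
      by_contra hne
      have hlt : Encodable.encode c' < Encodable.encode c := by omega
      have h1 : (g c')[Encodable.encode c']'(by rw [g_length]; omega) = 1 := g_getElem_eq c'
      have h0 : (g c)[Encodable.encode c']'(by rw [g_length]; omega) = 0 := g_getElem_lt c hlt
      have := List.IsPrefix.getElem hpre (i := Encodable.encode c') (by rw [g_length]; omega)
      rw [h1, h0] at this
      exact absurd this (by decide)
    have : c' = c := Encodable.encode_injective heq
    rwa [this] at hc'

lemma primrec_g : Primrec g := by
  have h1 : Primrec fun c : Code => List.replicate (Encodable.encode c) (0 : Fin 3) := by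
    have h : Primrec fun c : Code => (List.range (Encodable.encode c)).map (fun _ => (0 : Fin 3)) :=
      Primrec.list_map (Primrec.list_range.comp Primrec.encode) (Primrec.const _).to₂
    refine h.of_eq fun c => ?_
    simp [List.map_const']
  exact (Primrec.list_append.comp h1 (Primrec.const [1])).of_eq fun c => rfl

lemma ksafety : KSafety 1 H := by
  intro T' hT'
  simp only [H, Set.mem_setOf_eq, not_forall] at hT'
  obtain ⟨t', ht', v, hv, hBv⟩ := hT'
  rw [not_not] at hBv
  refine ⟨{v}, by simp, (badPrefix_iff v).2 hBv, ?_⟩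
  intro t ht
  simp only [Finset.mem_singleton] at ht
  rw [ht]
  exact ⟨t', ht', hv⟩

lemma not_computable : ¬ ComputablePred (fun w : List (Fin 3) => BadPrefix H {w}) := by
  intro hcomp
  have hB : ComputablePred B := by
    obtain ⟨f, hf, hfe⟩ := ComputablePred.computable_iff.1 hcomp
    refine ComputablePred.computable_iff.2 ⟨f, hf, ?_⟩
    funext w
    have : BadPrefix H {w} = (f w : Prop) := congrFun hfe w
    rw [← this]
    exact propext (badPrefix_iff w).symm
  have hS : ComputablePred S := by
    obtain ⟨f, hf, hfe⟩ := ComputablePred.computable_iff.1 hB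
    refine ComputablePred.computable_iff.2 ⟨fun c => f (g c), hf.comp primrec_g.to_comp, ?_⟩
    funext c
    have : B (g c) = (f (g c) : Prop) := congrFun hfe (g c)
    rw [← this]
    exact propext (S_iff c)
  exact ComputablePred.halting_problem 0 hS

end Stmt17Aux

theorem stmt17 :
    ∃ H : Set (Set (ℕ → Fin 3)), KSafety 1 H ∧
      ¬ ComputablePred (fun w : List (Fin 3) => BadPrefix H {w}) :=
  ⟨Stmt17Aux.H, Stmt17Aux.ksafety, Stmt17Aux.not_computable⟩
end
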